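/- arXiv:1211.4164 — 2 statements merged into one kernel-verified Lean document; each statement's English description precedes it below -/
import Mathlib

section
/- Every special orthogonal transformation of ℝ⁴ restricted to S³ has the form x ↦ g x h for some unit quaternions g, h ∈ S³, where the products are quaternion multiplication. -/
/-!
By Cartan–Dieudonné, `ρ` is a product of reflections in hyperplanes `uᗮ`, and for a unit
quaternion `u` the reflection in `uᗮ` is `x ↦ -(u * star x * u)`. A product of `k` such
reflections is therefore `x ↦ g * star^[k] x * h` with unit `g, h`. Each reflection has
determinant `-1`, so `det ρ = 1` forces `k` to be even, and then `star^[k] = id`.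
-/

open Module Submodule Quaternion

theorem det_prod_reflection_orthogonal_span_singleton {E : Type*} [NormedAddCommGroup E]
    [InnerProductSpace ℝ E] [FiniteDimensional ℝ E] (l : List E) :
    LinearMap.det (l.map fun v => (ℝ ∙ v)ᗮ.reflection).prod.toLinearMap =
      (-1) ^ (l.map fun v => finrank ℝ (ℝ ∙ v)).sum := by
  induction l with
  | nil => exact LinearMap.det_id
  | cons v l ih =>
    have hv := (ℝ ∙ v)ᗮ.det_reflection
    rw [orthogonal_orthogonal] at hv
    rw [List.map_cons, List.prod_cons, List.map_cons, List.sum_cons, pow_add, ← ih, ← hv]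
    exact LinearMap.det_comp _ _

namespace Quaternion

theorem mul_star_mul_of_norm_eq_one {u : ℍ[ℝ]} (hu : ‖u‖ = 1) (x : ℍ[ℝ]) :
    u * star x * u = (2 * inner ℝ u x) • u - x := by
  have hunit : star u * u = 1 := by
    rw [star_mul_self, normSq_eq_norm_mul_self, hu, mul_one, coe_one]
  have hre : (2 * (u * star x).re) • u = u * star x * u + x := by
    rw [← coe_mul_eq_smul, ← self_add_star' (u * star x), add_mul, star_mul, star_star,
      mul_assoc x, hunit, mul_one]
  rw [inner_def, hre, add_sub_cancel_right]

theorem reflection_orthogonal_span_singleton_of_norm_eq_one {u : ℍ[ℝ]} (hu : ‖u‖ = 1)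
    (x : ℍ[ℝ]) : (ℝ ∙ u)ᗮ.reflection x = -(u * star x * u) := by
  rw [reflection_orthogonal_apply, reflection_singleton_apply, mul_star_mul_of_norm_eq_one hu,
    hu]
  simp only [RCLike.ofReal_one, one_pow, div_one, neg_sub]
  module

theorem exists_reflection_orthogonal_span_singleton_eq {v : ℍ[ℝ]} (hv : v ≠ 0) :
    ∃ u : ℍ[ℝ], ‖u‖ = 1 ∧ ∀ x, (ℝ ∙ v)ᗮ.reflection x = -(u * star x * u) := by
  have hu : ‖‖v‖⁻¹ • v‖ = 1 := by
    rw [norm_smul, norm_inv, norm_norm, inv_mul_cancel₀ (norm_ne_zero_iff.mpr hv)]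
  refine ⟨‖v‖⁻¹ • v, hu, fun x => ?_⟩
  have hspan : (ℝ ∙ (‖v‖⁻¹ • v)) = ℝ ∙ v := span_singleton_smul_eq (by simpa using hv) v
  simp_rw [← reflection_orthogonal_span_singleton_of_norm_eq_one hu, hspan]

theorem exists_prod_reflection_eq (l : List ℍ[ℝ]) :
    ∃ a b : ℍ[ℝ], ‖a‖ = 1 ∧ ‖b‖ = 1 ∧ ∀ x, (l.map fun v => (ℝ ∙ v)ᗮ.reflection).prod x =
      a * star^[(l.map fun v => finrank ℝ (ℝ ∙ v)).sum] x * b := by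
  induction l with
  | nil => exact ⟨1, 1, norm_one, norm_one, fun x => by simp⟩
  | cons v l ih =>
    obtain ⟨a, b, ha, hb, hab⟩ := ih
    simp only [List.map_cons, List.prod_cons, List.sum_cons, LinearIsometryEquiv.coe_mul,
      Function.comp_apply, hab]
    by_cases hv : v = 0
    · subst hv
      refine ⟨a, b, ha, hb, fun x => ?_⟩
      have hfin : finrank ℝ (ℝ ∙ (0 : ℍ[ℝ])) = 0 := by simp
      rw [hfin, zero_add]
      exact reflection_mem_subspace_eq_self (by simp)
    · obtain ⟨u, hu, hru⟩ := exists_reflection_orthogonal_span_singleton_eq hv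
      refine ⟨-(u * star b), star a * u, by simp [hu, hb], by simp [hu, ha], fun x => ?_⟩
      rw [hru, finrank_span_singleton hv, add_comm, Function.iterate_succ_apply']
      simp only [star_mul, neg_mul, mul_assoc]

end Quaternion

/-- Every special orthogonal transformation of `ℝ⁴ ≅ ℍ` restricted to the unit sphere has
the form `x ↦ g x h` for unit quaternions `g, h`. -/
theorem so4_eq_quaternion_mul (ρ : Quaternion ℝ ≃ₗᵢ[ℝ] Quaternion ℝ)
    (hρ : LinearMap.det (ρ.toLinearEquiv : Quaternion ℝ →ₗ[ℝ] Quaternion ℝ) = 1) :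
    ∃ g h : Quaternion ℝ, ‖g‖ = 1 ∧ ‖h‖ = 1 ∧ ∀ x : Quaternion ℝ, ρ x = g * x * h := by
  obtain ⟨l, -, rfl⟩ := ρ.reflections_generate_dim
  obtain ⟨g, h, hg, hh, hgh⟩ := exists_prod_reflection_eq l
  rw [det_prod_reflection_orthogonal_span_singleton] at hρ
  have heven := (neg_one_pow_eq_one_iff_even (by norm_num)).mp hρ
  refine ⟨g, h, hg, hh, fun x => ?_⟩
  rw [hgh, star_involutive.iterate_even heven, id]
end

section
/- For f in the space 𝓗_k ⊗ 𝓗_k of products of degree-k spherical harmonics on S³ × S³, the operator T is given by integration against the kernel Z^{(k)}_{x̄'x y'}(y): that is, (k+1)^{-2}·projection-pairings satisfy ∬ Z^{(k)}_{x'}(x) Z^{(k)}_{y'}(y) (Tf)(x,y) dx dy = ∬ f(x,y) Z^{(k)}_{x̄' x y'}(y) dx dy for all x', y' ∈ S³. -/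
open MvPolynomial MeasureTheory

noncomputable section

/-- The group of unit quaternions, `S³ ≅ SU(2)`. -/
abbrev G := Metric.sphere (0 : Quaternion ℝ) 1

instance : MeasurableSpace G := borel G
instance : BorelSpace G := ⟨rfl⟩

/-- Coordinates of a quaternion, identifying `ℍ ≅ ℝ⁴`. -/
def qCoords (q : Quaternion ℝ) : Fin 4 → ℝ := ![q.re, q.imI, q.imJ, q.imK]

/-- The Euclidean Laplacian on polynomials on `ℝ⁴`. -/
def polyLaplacian (p : MvPolynomial (Fin 4) ℝ) : MvPolynomial (Fin 4) ℝ :=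
  ∑ i : Fin 4, pderiv i (pderiv i p)

/-- The space `𝓗_k` of degree-`k` spherical harmonics on `S³`: restrictions to the unit
sphere of harmonic polynomials on `ℝ⁴` homogeneous of degree `k`. -/
def SphHarm (k : ℕ) : Set (G → ℝ) :=
  {f | ∃ p : MvPolynomial (Fin 4) ℝ, polyLaplacian p = 0 ∧ p.IsHomogeneous k ∧
    ∀ x : G, f x = eval (qCoords (x : Quaternion ℝ)) p}

/-- `IsZonal μ k Z` says that `Z` is the reproducing kernel of the orthogonal projection
`E_k : L²(S³) → 𝓗_k`: for each `x`, `Z x ∈ 𝓗_k`; integration against `Z x` reproduces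
elements of `𝓗_k` and annihilates `𝓗_ℓ` for `ℓ ≠ k`. -/
structure IsZonal (μ : Measure G) (k : ℕ) (Z : G → G → ℝ) : Prop where
  mem : ∀ x : G, Z x ∈ SphHarm k
  repro : ∀ u ∈ SphHarm k, ∀ x : G, ∫ y : G, Z x y * u y ∂μ = u x
  annih : ∀ ℓ : ℕ, ℓ ≠ k → ∀ u ∈ SphHarm ℓ, ∀ x : G, ∫ y : G, Z x y * u y ∂μ = 0

/-- The averaging operator `Tf(x,y) = ∫ f(xg, gy) dg`. -/
def T (μ : Measure G) (f : G × G → ℝ) : G × G → ℝ :=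
  fun p => ∫ g : G, f (p.1 * g, g * p.2) ∂μ

/-- Products `u(x)v(y)` of degree-`k` spherical harmonics; their span is `𝓗_k ⊗ 𝓗_k`. -/
def ProdHarm (k : ℕ) : Set (G × G → ℝ) :=
  {F | ∃ u v : G → ℝ, u ∈ SphHarm k ∧ v ∈ SphHarm k ∧ F = fun p => u p.1 * v p.2}

/-!
Both sides equal `∫ f(x'g, gy') dg`. On the left, after exchanging the order of integration,
the substitution `x ↦ xg⁻¹`, `y ↦ g⁻¹y` and the bi-invariance of `Z` turn the inner double
integral into `∬ Z_{x'g}(x) Z_{gy'}(y) f(x,y)`, which is `f(x'g, gy')` because every slice of `f`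
lies in `𝓗_k` and is reproduced by `Z`. On the right, reproduction in `y` leaves
`∫ f(x, x'⁻¹xy') dx`, and the substitution `x = x'g` finishes.
-/

open Function

section Reproduction

variable {X : Type*} [MeasurableSpace X]

-- Integrability is part of membership so that the carrier is closed under sums.
def reproducedBy (μ : Measure X) (Z : X → X → ℝ) : Submodule ℝ (X → ℝ) where
  carrier := {u | ∀ x, Integrable (fun y => Z x y * u y) μ ∧ ∫ y, Z x y * u y ∂μ = u x}
  zero_mem' x := by simp
  add_mem' {u v} hu hv x := by
    have hsum : (fun y => Z x y * (u + v) y) = fun y => Z x y * u y + Z x y * v y := by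
      ext y; simp [mul_add]
    refine ⟨hsum ▸ (hu x).1.add (hv x).1, ?_⟩
    rw [hsum, integral_add (hu x).1 (hv x).1, (hu x).2, (hv x).2, Pi.add_apply]
  smul_mem' c u hu x := by
    have hsmul : (fun y => Z x y * (c • u) y) = fun y => c * (Z x y * u y) := by
      ext y; simp only [Pi.smul_apply, smul_eq_mul]; ring
    refine ⟨hsmul ▸ (hu x).1.const_mul c, ?_⟩
    rw [hsmul, integral_const_mul, (hu x).2, Pi.smul_apply, smul_eq_mul]

variable [TopologicalSpace X] [OpensMeasurableSpace X] [CompactSpace X]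

theorem mem_reproducedBy_of_continuous {μ : Measure X} [IsFiniteMeasure μ] {Z : X → X → ℝ}
    (hZ : ∀ x, Continuous (Z x)) {u : X → ℝ} (hu : Continuous u)
    (hrepro : ∀ x, ∫ y, Z x y * u y ∂μ = u x) : u ∈ reproducedBy μ Z := fun x =>
  ⟨((hZ x).mul hu).integrable_of_hasCompactSupport (.of_compactSpace _), hrepro x⟩

theorem integral_prod_kernel_mul_kernel_mul [SecondCountableTopology X] {μ : Measure X}
    [IsFiniteMeasure μ] {Z : X → X → ℝ} (hZ : Continuous (uncurry Z)) {f : X × X → ℝ}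
    (hf : Continuous f) (hfst : ∀ y, (fun x => f (x, y)) ∈ reproducedBy μ Z)
    (hsnd : ∀ x, (fun y => f (x, y)) ∈ reproducedBy μ Z) (a b : X) :
    ∫ p, Z a p.1 * Z b p.2 * f p ∂(μ.prod μ) = f (a, b) := by
  have hint : Integrable (fun p : X × X => Z a p.1 * Z b p.2 * f p) (μ.prod μ) := by
    refine Continuous.integrable_of_hasCompactSupport ?_ (.of_compactSpace _)
    fun_prop
  rw [integral_prod _ hint]
  calc ∫ x, ∫ y, Z a x * Z b y * f (x, y) ∂μ ∂μ = ∫ x, Z a x * f (x, b) ∂μ := by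
        congr 1; ext x
        simp_rw [mul_assoc, integral_const_mul]
        exact congrArg (Z a x * ·) (hsnd x b).2
    _ = f (a, b) := (hfst b a).2

end Reproduction

theorem integral_prod_comp_mul_right_mul_left {K E : Type*} [Group K] [MeasurableSpace K]
    [MeasurableMul K] [NormedAddCommGroup E] [NormedSpace ℝ E] (μ : Measure K) [SFinite μ]
    [μ.IsMulLeftInvariant] [μ.IsMulRightInvariant] (F : K × K → E) (g : K) :
    ∫ p, F (p.1 * g, g * p.2) ∂(μ.prod μ) = ∫ p, F p ∂(μ.prod μ) :=
  ((measurePreserving_mul_right μ g).prod (measurePreserving_mul_left μ g)).integral_comp'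
    (f := (MeasurableEquiv.mulRight g).prodCongr (MeasurableEquiv.mulLeft g)) F

section CompactGroup

variable {K : Type*} [Group K] [TopologicalSpace K] [IsTopologicalGroup K] [MeasurableSpace K]
  [BorelSpace K]

theorem isMulRightInvariant_of_isProbabilityMeasure [LocallyCompactSpace K] (μ : Measure K)
    [μ.IsHaarMeasure] [IsProbabilityMeasure μ] : μ.IsMulRightInvariant where
  map_mul_right_eq_self g :=
    have : IsProbabilityMeasure (μ.map (· * g)) :=
      Measure.isProbabilityMeasure_map (measurable_mul_const g).aemeasurable
    Measure.isHaarMeasure_eq_of_isProbabilityMeasure _ _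

variable [CompactSpace K] [SecondCountableTopology K] {μ : Measure K} [IsFiniteMeasure μ]
  [μ.IsMulLeftInvariant] {Z : K → K → ℝ} {f : K × K → ℝ}

theorem integral_prod_kernel_mul_kernel_mul_average [μ.IsMulRightInvariant]
    (hZ : Continuous (uncurry Z)) (hZ_left : ∀ g a b, Z (g * a) (g * b) = Z a b)
    (hZ_right : ∀ g a b, Z (a * g) (b * g) = Z a b) (hf : Continuous f)
    (hfst : ∀ y, (fun x => f (x, y)) ∈ reproducedBy μ Z)
    (hsnd : ∀ x, (fun y => f (x, y)) ∈ reproducedBy μ Z) (x' y' : K) :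
    ∫ p, Z x' p.1 * Z y' p.2 * ∫ g, f (p.1 * g, g * p.2) ∂μ ∂(μ.prod μ) =
      ∫ g, f (x' * g, g * y') ∂μ := by
  have hint : Integrable (uncurry fun (p : K × K) (g : K) =>
      Z x' p.1 * Z y' p.2 * f (p.1 * g, g * p.2)) ((μ.prod μ).prod μ) := by
    refine Continuous.integrable_of_hasCompactSupport ?_ (.of_compactSpace _)
    fun_prop
  have htranslate : ∀ g, ∫ p, Z x' p.1 * Z y' p.2 * f (p.1 * g, g * p.2) ∂(μ.prod μ) =
      f (x' * g, g * y') := fun g => by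
    simp_rw [← hZ_right g x', ← hZ_left g y']
    rw [integral_prod_comp_mul_right_mul_left μ
      (fun p => Z (x' * g) p.1 * Z (g * y') p.2 * f p) g]
    exact integral_prod_kernel_mul_kernel_mul hZ hf hfst hsnd _ _
  simp_rw [← integral_const_mul]
  rw [integral_integral_swap hint]
  exact integral_congr_ae (.of_forall htranslate)

theorem integral_prod_mul_kernel_translate (hZ : Continuous (uncurry Z)) (hf : Continuous f)
    (hsnd : ∀ x, (fun y => f (x, y)) ∈ reproducedBy μ Z) (x' y' : K) :
    ∫ p, f p * Z (x'⁻¹ * p.1 * y') p.2 ∂(μ.prod μ) = ∫ g, f (x' * g, g * y') ∂μ := by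
  have hint : Integrable (fun p : K × K => f p * Z (x'⁻¹ * p.1 * y') p.2) (μ.prod μ) := by
    refine Continuous.integrable_of_hasCompactSupport ?_ (.of_compactSpace _)
    fun_prop
  rw [integral_prod _ hint]
  calc ∫ x, ∫ y, f (x, y) * Z (x'⁻¹ * x * y') y ∂μ ∂μ = ∫ x, f (x, x'⁻¹ * x * y') ∂μ := by
        congr 1; ext x
        simp_rw [mul_comm (f (x, _))]
        exact (hsnd x _).2
    _ = ∫ g, f (x' * g, g * y') ∂μ := by
        rw [← integral_mul_left_eq_self _ x']
        simp_rw [inv_mul_cancel_left]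

end CompactGroup

section SphericalHarmonics

theorem continuous_qCoords : Continuous qCoords := by
  refine continuous_pi fun i => ?_
  fin_cases i
  exacts [Quaternion.continuous_re, Quaternion.continuous_imI, Quaternion.continuous_imJ,
    Quaternion.continuous_imK]

theorem continuous_of_mem_sphHarm {k : ℕ} {u : G → ℝ} (hu : u ∈ SphHarm k) : Continuous u := by
  obtain ⟨p, -, -, hp⟩ := hu
  rw [funext hp]
  exact (continuous_eval p).comp (continuous_qCoords.comp continuous_subtype_val)

theorem continuous_of_mem_span_prodHarm {k : ℕ} {f : G × G → ℝ}
    (hf : f ∈ Submodule.span ℝ (ProdHarm k)) : Continuous f := by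
  suffices h : Submodule.span ℝ (ProdHarm k) ≤ LinearMap.range (ContinuousMap.coeFnLinearMap ℝ) by
    obtain ⟨F, rfl⟩ := h hf
    exact F.continuous
  rw [Submodule.span_le]
  rintro _ ⟨u, v, hu, hv, rfl⟩
  exact ⟨⟨_, ((continuous_of_mem_sphHarm hu).comp continuous_fst).mul
    ((continuous_of_mem_sphHarm hv).comp continuous_snd)⟩, rfl⟩

theorem span_prodHarm_le_comap_fst (k : ℕ) (y : G) :
    Submodule.span ℝ (ProdHarm k) ≤
      (Submodule.span ℝ (SphHarm k)).comap (LinearMap.funLeft ℝ ℝ fun x => (x, y)) := by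
  rw [Submodule.span_le]
  rintro _ ⟨u, v, hu, -, rfl⟩
  rw [SetLike.mem_coe, Submodule.mem_comap]
  convert Submodule.smul_mem _ (v y) (Submodule.subset_span hu) using 1
  ext x
  exact mul_comm _ _

theorem span_prodHarm_le_comap_snd (k : ℕ) (x : G) :
    Submodule.span ℝ (ProdHarm k) ≤
      (Submodule.span ℝ (SphHarm k)).comap (LinearMap.funLeft ℝ ℝ (Prod.mk x)) := by
  rw [Submodule.span_le]
  rintro _ ⟨u, v, -, hv, rfl⟩
  exact Submodule.smul_mem _ (u x) (Submodule.subset_span hv)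

theorem span_sphHarm_le_reproducedBy {μ : Measure G} [IsFiniteMeasure μ] {k : ℕ}
    {Z : G → G → ℝ} (hZ : IsZonal μ k Z) (hZcont : ∀ x, Continuous (Z x)) :
    Submodule.span ℝ (SphHarm k) ≤ reproducedBy μ Z := by
  rw [Submodule.span_le]
  intro u hu
  exact mem_reproducedBy_of_continuous hZcont (continuous_of_mem_sphHarm hu) (hZ.repro u hu)

end SphericalHarmonics

/-- For `f ∈ 𝓗_k ⊗ 𝓗_k`, the operator `T` is given by integration against the kernel
`Z^{(k)}_{x̄'xy'}(y)`:
`∬ Z^{(k)}_{x'}(x) Z^{(k)}_{y'}(y) Tf(x,y) dx dy = ∬ f(x,y) Z^{(k)}_{x̄'xy'}(y) dx dy`. -/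
theorem T_kernel_on_diagonal (μ : Measure G) [μ.IsHaarMeasure] [IsProbabilityMeasure μ]
    (k : ℕ) (Z : G → G → ℝ) (hZ : IsZonal μ k Z)
    (hZcont : Continuous fun p : G × G => Z p.1 p.2)
    (hZinv : ∀ g h a b : G, Z (g * a * h) (g * b * h) = Z a b)
    (f : G × G → ℝ) (hf : f ∈ Submodule.span ℝ (ProdHarm k)) :
    ∀ x' y' : G,
      ∫ p : G × G, Z x' p.1 * Z y' p.2 * T μ f p ∂(μ.prod μ) =
      ∫ p : G × G, f p * Z (x'⁻¹ * p.1 * y') p.2 ∂(μ.prod μ) := by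
  intro x' y'
  have := isMulRightInvariant_of_isProbabilityMeasure μ
  have hrepro := span_sphHarm_le_reproducedBy hZ fun x => hZcont.comp (Continuous.prodMk_right x)
  have hfst y := hrepro (span_prodHarm_le_comap_fst k y hf)
  have hsnd x := hrepro (span_prodHarm_le_comap_snd k x hf)
  have hf_cont := continuous_of_mem_span_prodHarm hf
  have hZ_left g a b : Z (g * a) (g * b) = Z a b := by simpa using hZinv g 1 a b
  have hZ_right g a b : Z (a * g) (b * g) = Z a b := by simpa using hZinv 1 g a b
  exact (integral_prod_kernel_mul_kernel_mul_average hZcont hZ_left hZ_right hf_cont hfst hsnd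
    x' y').trans (integral_prod_mul_kernel_translate hZcont hf_cont hsnd x' y').symm
end
end
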